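/- arXiv:1406.1081 — 4 statements merged into one kernel-verified Lean document; each statement's English description precedes it below -/
import Mathlib

section
/- Let a, b, c be positive real numbers with a*b − c > 0, and define P : ℝ → ℝ by P(R) = (1 − 2^{2R}·b)/(2^{2R}·c − a). Then P is strictly convex on the interval I = {R : 1/b < 2^{2R} < a/c}. -/
private lemma aux_eq (a b c V : ℝ) (hc : 0 < c) (hV : V * c < a) :
    (1 - V * b) / (V * c - a) = (a * b - c) / c * (1 / (a - V * c)) - b / c := by
  have h1 : V * c - a ≠ 0 := by intro h; nlinarith
  have h2 : a - V * c ≠ 0 := by intro h; nlinarith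
  field_simp
  ring

private lemma inv_conv {t u p q r : ℝ} (hp : 0 < p) (hq : 0 < q) (ht : 0 < t) (hu : 0 < u)
    (htu : t + u = 1) (hr : t * p + u * q < r) : 1 / r < t * (1 / p) + u * (1 / q) := by
  have hr0 : 0 < r := lt_trans (by positivity) hr
  rw [show t * (1 / p) + u * (1 / q) = (t * q + u * p) / (p * q) by field_simp,
    div_lt_div_iff₀ hr0 (by positivity)]
  have h1 : 0 < t * q + u * p := by positivity
  have e : (t * q + u * p) * (t * p + u * q) - p * q = t * u * (p - q) ^ 2 := by
    linear_combination (p * q * (t + u + 1)) * htu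
  nlinarith [mul_lt_mul_of_pos_left hr h1, e,
    mul_nonneg (mul_pos ht hu).le (sq_nonneg (p - q))]

private lemma exp_strict {x y t u : ℝ} (hxy : x ≠ y) (ht : 0 < t) (hu : 0 < u)
    (htu : t + u = 1) :
    (2:ℝ) ^ (2 * (t * x + u * y)) < t * (2:ℝ) ^ (2 * x) + u * (2:ℝ) ^ (2 * y) := by
  have hne : Real.log 2 * (2 * x) ≠ Real.log 2 * (2 * y) := by
    intro h
    have hl : Real.log 2 ≠ 0 := ne_of_gt (Real.log_pos one_lt_two)
    apply hxy
    have := mul_left_cancel₀ hl h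
    linarith
  have h := strictConvexOn_exp.2 (Set.mem_univ (Real.log 2 * (2 * x)))
    (Set.mem_univ (Real.log 2 * (2 * y))) hne ht hu htu
  simp only [smul_eq_mul] at h
  rw [Real.rpow_def_of_pos two_pos, Real.rpow_def_of_pos two_pos, Real.rpow_def_of_pos two_pos]
  calc Real.exp (Real.log 2 * (2 * (t * x + u * y)))
      = Real.exp (t * (Real.log 2 * (2 * x)) + u * (Real.log 2 * (2 * y))) := by ring_nf
    _ < _ := h

/-- The CPF power-rate function `P(R) = (1 - 2^{2R}·b)/(2^{2R}·c - a)` is strictly convex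
on the feasible interval `{R : 1/b < 2^{2R} < a/c}` (key step of Theorem 1). -/
theorem stmt_5 (a b c : ℝ) (ha : 0 < a) (hb : 0 < b) (hc : 0 < c)
    (hd : 0 < a * b - c) :
    StrictConvexOn ℝ {R : ℝ | 1 / b < (2:ℝ) ^ (2 * R) ∧ (2:ℝ) ^ (2 * R) < a / c}
      (fun R : ℝ => (1 - (2:ℝ) ^ (2 * R) * b) / ((2:ℝ) ^ (2 * R) * c - a)) := by
  constructor
  · -- convexity of the set
    intro x hx y hy t u ht hu htu
    simp only [Set.mem_setOf_eq, smul_eq_mul] at *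
    obtain ⟨hx1, hx2⟩ := hx
    obtain ⟨hy1, hy2⟩ := hy
    have hxx : t * x + u * x = x := by linear_combination x * htu
    have hyy : t * y + u * y = y := by linear_combination y * htu
    rcases le_total x y with h | h
    · have h1 : 2 * x ≤ 2 * (t * x + u * y) := by
        nlinarith [mul_nonneg hu (sub_nonneg.mpr h)]
      have h2 : 2 * (t * x + u * y) ≤ 2 * y := by
        nlinarith [mul_nonneg ht (sub_nonneg.mpr h)]
      exact ⟨lt_of_lt_of_le hx1 ((Real.rpow_le_rpow_left_iff one_lt_two).mpr h1),
        lt_of_le_of_lt ((Real.rpow_le_rpow_left_iff one_lt_two).mpr h2) hy2⟩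
    · have h1 : 2 * y ≤ 2 * (t * x + u * y) := by
        nlinarith [mul_nonneg ht (sub_nonneg.mpr h)]
      have h2 : 2 * (t * x + u * y) ≤ 2 * x := by
        nlinarith [mul_nonneg hu (sub_nonneg.mpr h)]
      exact ⟨lt_of_lt_of_le hy1 ((Real.rpow_le_rpow_left_iff one_lt_two).mpr h1),
        lt_of_le_of_lt ((Real.rpow_le_rpow_left_iff one_lt_two).mpr h2) hx2⟩
  · intro x hx y hy hxy t u ht hu htu
    simp only [Set.mem_setOf_eq, smul_eq_mul] at *
    set X : ℝ := (2:ℝ) ^ (2 * x) with hXdef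
    set Y : ℝ := (2:ℝ) ^ (2 * y) with hYdef
    set Z : ℝ := (2:ℝ) ^ (2 * (t * x + u * y)) with hZdef
    have hXc : X * c < a := (lt_div_iff₀ hc).mp hx.2
    have hYc : Y * c < a := (lt_div_iff₀ hc).mp hy.2
    have hZlt : Z < t * X + u * Y := exp_strict hxy ht hu htu
    have hkey0 : t * (a - X * c) + u * (a - Y * c) < a - Z * c := by
      have e : t * (a - X * c) + u * (a - Y * c) = a - (t * X + u * Y) * c := by
        linear_combination a * htu
      rw [e]
      have := mul_lt_mul_of_pos_right hZlt hc
      linarith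
    have hpX : 0 < a - X * c := by linarith
    have hpY : 0 < a - Y * c := by linarith
    have hZc : Z * c < a := by nlinarith [mul_pos ht hpX, mul_pos hu hpY]
    have hkey := inv_conv hpX hpY ht hu htu hkey0
    rw [aux_eq a b c Z hc hZc, aux_eq a b c X hc hXc, aux_eq a b c Y hc hYc]
    have hk : 0 < (a * b - c) / c := div_pos hd hc
    have h2 := mul_lt_mul_of_pos_left hkey hk
    have h3 : t * (b / c) + u * (b / c) = b / c := by linear_combination (b / c) * htu
    nlinarith [h2, h3]
end

section
/- Let a, b, c be positive real numbers with d := a*b − c > 0, and define P : ℝ → ℝ by P(R) = (1 − 2^{2R}·b)/(2^{2R}·c − a). Then at every R with 1/b < 2^{2R} < a/c, writing x = 2^{2R}, the second derivative of P equals P''(R) = −4·(ln 2)² · (a·d·x + c·d·x²)/(x·c − a)³, and this quantity is strictly positive. -/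
/-! Writing `x = 2^{2R}`, the function is the Möbius map `x ↦ (1 - b x)/(c x - a)` composed with an
exponential, so `x' = 2 ln 2 · x`. The quotient rule gives `P' = 2 ln 2 · d x/(c x - a)²`, and
differentiating once more gives `P'' = -(2 ln 2)² d x (a + c x)/(c x - a)³`, which is positive
because the denominator is negative exactly when `x < a/c`. -/

open Filter Topology

section MobiusComp

variable {x : ℝ → ℝ} {x' t : ℝ} (a b c : ℝ)

lemma hasDerivAt_mobius_comp (hx : HasDerivAt x x' t) (hne : x t * c - a ≠ 0) :
    HasDerivAt (fun s => (1 - x s * b) / (x s * c - a))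
      ((a * b - c) * x' / (x t * c - a) ^ 2) t := by
  refine (((hx.mul_const b).const_sub 1).div ((hx.mul_const c).sub_const a) hne).congr_deriv ?_
  field_simp
  ring

lemma hasDerivAt_div_sq_mobius_denom (hx : HasDerivAt x x' t) (hne : x t * c - a ≠ 0) :
    HasDerivAt (fun s => x s / (x s * c - a) ^ 2)
      (-(a + c * x t) * x' / (x t * c - a) ^ 3) t := by
  refine (hx.div (((hx.mul_const c).sub_const a).fun_pow 2) (pow_ne_zero 2 hne)).congr_deriv ?_
  field_simp
  ring

lemma deriv_deriv_mobius_comp_of_hasDerivAt_eq_mul {k : ℝ} (hx : ∀ s, HasDerivAt x (k * x s) s)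
    (hne : x t * c - a ≠ 0) :
    deriv (deriv (fun s => (1 - x s * b) / (x s * c - a))) t
      = -k ^ 2 * ((a * (a * b - c) * x t + c * (a * b - c) * x t ^ 2) / (x t * c - a) ^ 3) := by
  have hne_near : ∀ᶠ s in 𝓝 t, x s * c - a ≠ 0 :=
    ((hx t).continuousAt.mul_const c |>.sub_const a).eventually_ne hne
  have hderiv : deriv (fun s => (1 - x s * b) / (x s * c - a))
      =ᶠ[𝓝 t] fun s => k * (a * b - c) * (x s / (x s * c - a) ^ 2) := by
    filter_upwards [hne_near] with s hs
    rw [(hasDerivAt_mobius_comp a b c (hx s) hs).deriv]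
    ring
  rw [hderiv.deriv_eq, ((hasDerivAt_div_sq_mobius_denom a c (hx t) hne).const_mul _).deriv]
  field_simp

end MobiusComp

lemma hasDerivAt_two_rpow_two_mul (t : ℝ) :
    HasDerivAt (fun s : ℝ => (2 : ℝ) ^ (2 * s)) (2 * Real.log 2 * (2 : ℝ) ^ (2 * t)) t := by
  refine (((hasDerivAt_id t).const_mul 2).const_rpow two_pos).congr_deriv ?_
  simp only [id]
  ring

theorem stmt_6_general (a b c d : ℝ) (ha : 0 < a) (hc : 0 < c)
    (hd : d = a * b - c) (hd' : 0 < d) (R : ℝ)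
    (h2 : (2:ℝ) ^ (2 * R) < a / c) :
    deriv (deriv (fun R : ℝ => (1 - (2:ℝ) ^ (2 * R) * b) / ((2:ℝ) ^ (2 * R) * c - a))) R
      = -4 * (Real.log 2) ^ 2 *
        ((a * d * (2:ℝ) ^ (2 * R) + c * d * ((2:ℝ) ^ (2 * R)) ^ 2) /
          ((2:ℝ) ^ (2 * R) * c - a) ^ 3) ∧
    0 < -4 * (Real.log 2) ^ 2 *
        ((a * d * (2:ℝ) ^ (2 * R) + c * d * ((2:ℝ) ^ (2 * R)) ^ 2) /
          ((2:ℝ) ^ (2 * R) * c - a) ^ 3) := by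
  set x := (2:ℝ) ^ (2 * R)
  have hx : 0 < x := Real.rpow_pos_of_pos two_pos _
  have hdenom : x * c - a < 0 := by linarith [(lt_div_iff₀ hc).mp h2]
  subst hd
  refine ⟨?_, ?_⟩
  · rw [deriv_deriv_mobius_comp_of_hasDerivAt_eq_mul a b c hasDerivAt_two_rpow_two_mul hdenom.ne]
    ring
  · have hlog : 0 < Real.log 2 := Real.log_pos one_lt_two
    have hcube : (x * c - a) ^ 3 < 0 := Odd.pow_neg (by decide) hdenom
    have hfrac := div_neg_of_pos_of_neg
      (by positivity : 0 < a * (a * b - c) * x + c * (a * b - c) * x ^ 2) hcube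
    nlinarith [mul_pos hlog hlog]

/-- Appendix B computation: on the feasible interval the second derivative of the
CPF power-rate function equals `-4 (ln 2)² (a d x + c d x²)/(x c - a)³` with
`x = 2^{2R}` and `d = a*b - c`, and it is strictly positive. -/
theorem stmt_6 (a b c d : ℝ) (ha : 0 < a) (hb : 0 < b) (hc : 0 < c)
    (hd : d = a * b - c) (hd' : 0 < d) (R : ℝ)
    (h1 : 1 / b < (2:ℝ) ^ (2 * R)) (h2 : (2:ℝ) ^ (2 * R) < a / c) :
    deriv (deriv (fun R : ℝ => (1 - (2:ℝ) ^ (2 * R) * b) / ((2:ℝ) ^ (2 * R) * c - a))) R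
      = -4 * (Real.log 2) ^ 2 *
        ((a * d * (2:ℝ) ^ (2 * R) + c * d * ((2:ℝ) ^ (2 * R)) ^ 2) /
          ((2:ℝ) ^ (2 * R) * c - a) ^ 3) ∧
    0 < -4 * (Real.log 2) ^ 2 *
        ((a * d * (2:ℝ) ^ (2 * R) + c * d * ((2:ℝ) ^ (2 * R)) ^ 2) /
          ((2:ℝ) ^ (2 * R) * c - a) ^ 3) :=
  stmt_6_general a b c d ha hc hd hd' R h2
end

section
/- Let l, a, c, d, β₀ be positive real numbers. Then x₂ := (2·a·c·l + β₀·d − √(β₀²·d² + 4·a·c·l·d·β₀))/(2·l·c²) satisfies 0 < x₂ < a/c. -/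
/-- The smaller root of the KKT quadratic is feasible: `0 < x₂ < a/c`. -/
theorem stmt_10 (l a c d β₀ : ℝ) (hl : 0 < l) (ha : 0 < a) (hc : 0 < c)
    (hd : 0 < d) (hβ : 0 < β₀) :
    0 < (2 * a * c * l + β₀ * d - Real.sqrt (β₀ ^ 2 * d ^ 2 + 4 * a * c * l * d * β₀))
        / (2 * l * c ^ 2) ∧
    (2 * a * c * l + β₀ * d - Real.sqrt (β₀ ^ 2 * d ^ 2 + 4 * a * c * l * d * β₀))
        / (2 * l * c ^ 2) < a / c := by
  have hden : 0 < 2 * l * c ^ 2 := by positivity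
  have h1 : Real.sqrt (β₀ ^ 2 * d ^ 2 + 4 * a * c * l * d * β₀) < 2 * a * c * l + β₀ * d := by
    rw [show (2 * a * c * l + β₀ * d) = Real.sqrt ((2 * a * c * l + β₀ * d) ^ 2) from
      (Real.sqrt_sq (by positivity)).symm]
    apply Real.sqrt_lt_sqrt (by positivity)
    nlinarith [sq_nonneg (2 * a * c * l), mul_pos (mul_pos (mul_pos ha hc) hl)
      (mul_pos hd hβ)]
  have h2 : β₀ * d < Real.sqrt (β₀ ^ 2 * d ^ 2 + 4 * a * c * l * d * β₀) := by
    rw [show (β₀ * d) = Real.sqrt ((β₀ * d) ^ 2) from (Real.sqrt_sq (by positivity)).symm]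
    apply Real.sqrt_lt_sqrt (by positivity)
    nlinarith [mul_pos (mul_pos (mul_pos ha hc) hl) (mul_pos hd hβ)]
  constructor
  · apply div_pos _ hden; linarith
  · rw [div_lt_div_iff₀ hden hc]
    nlinarith [mul_pos hl hc]
end

section
/- Let l, a, c, d, β₀, b be positive real numbers with a·b − c = d. Among the two roots of the quadratic l·c²·x² − (2·a·c·l + β₀·d)·x + a²·l = 0, exactly one lies in the open interval (0, a/c): namely x₂ = (2·a·c·l + β₀·d − √(β₀²·d² + 4·a·c·l·d·β₀))/(2·l·c²), while the other root is strictly greater than a/c. -/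
/-!
Write `p x = A x² - B x + C` with `A = l c²`, `B = 2 a c l + β₀ d`, `C = a² l`.
Its discriminant is `β₀² d² + 4 a c l d β₀`, so the two given values are the roots
`(B ± √(B² - 4 A C)) / (2 A)`.
At the feasibility bound `p (a / c) = -β₀ d a / c < 0`, and since `A > 0` this puts `a / c`
strictly between the roots. The smaller root is positive because `√(B² - 4 A C) < B`
when `A, B, C > 0`.
-/

section Quadratic

variable {A B C s : ℝ}

theorem quadratic_eq_mul_sub_root_mul_sub_root (hA : A ≠ 0) (hs : s ^ 2 = B ^ 2 - 4 * A * C)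
    (x : ℝ) :
    A * x ^ 2 - B * x + C = A * (x - (B - s) / (2 * A)) * (x - (B + s) / (2 * A)) := by
  field_simp
  linear_combination hs

theorem quadratic_root_sub_eq_zero (hA : A ≠ 0) (hs : s ^ 2 = B ^ 2 - 4 * A * C) :
    A * ((B - s) / (2 * A)) ^ 2 - B * ((B - s) / (2 * A)) + C = 0 := by
  rw [quadratic_eq_mul_sub_root_mul_sub_root hA hs, sub_self, mul_zero, zero_mul]

theorem quadratic_root_add_eq_zero (hA : A ≠ 0) (hs : s ^ 2 = B ^ 2 - 4 * A * C) :
    A * ((B + s) / (2 * A)) ^ 2 - B * ((B + s) / (2 * A)) + C = 0 := by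
  rw [quadratic_eq_mul_sub_root_mul_sub_root hA hs, sub_self, mul_zero]

theorem mem_Ioo_roots_of_quadratic_neg (hA : 0 < A) (hs₀ : 0 ≤ s)
    (hs : s ^ 2 = B ^ 2 - 4 * A * C) {t : ℝ} (ht : A * t ^ 2 - B * t + C < 0) :
    t ∈ Set.Ioo ((B - s) / (2 * A)) ((B + s) / (2 * A)) := by
  rw [quadratic_eq_mul_sub_root_mul_sub_root hA.ne' hs, mul_assoc] at ht
  have hsign := (pos_iff_neg_of_mul_neg ht).mp hA
  have hle : (B - s) / (2 * A) ≤ (B + s) / (2 * A) := by gcongr; linarith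
  constructor
  · nlinarith
  · nlinarith

theorem quadratic_root_sub_pos (hA : 0 < A) (hB : 0 < B) (hC : 0 < C)
    (hs : s ^ 2 = B ^ 2 - 4 * A * C) : 0 < (B - s) / (2 * A) := by
  have hsB : s < B := by nlinarith [mul_pos hA hC]
  exact div_pos (sub_pos.mpr hsB) (by positivity)

end Quadratic

theorem stmt_12_general (l a c d β₀ : ℝ) (hl : 0 < l) (ha : 0 < a) (hc : 0 < c)
    (hd : 0 < d) (hβ : 0 < β₀) :
    (l * c ^ 2 * ((2 * a * c * l + β₀ * d
        - Real.sqrt (β₀ ^ 2 * d ^ 2 + 4 * a * c * l * d * β₀)) / (2 * l * c ^ 2)) ^ 2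
      - (2 * a * c * l + β₀ * d) * ((2 * a * c * l + β₀ * d
        - Real.sqrt (β₀ ^ 2 * d ^ 2 + 4 * a * c * l * d * β₀)) / (2 * l * c ^ 2))
      + a ^ 2 * l = 0) ∧
    (l * c ^ 2 * ((2 * a * c * l + β₀ * d
        + Real.sqrt (β₀ ^ 2 * d ^ 2 + 4 * a * c * l * d * β₀)) / (2 * l * c ^ 2)) ^ 2
      - (2 * a * c * l + β₀ * d) * ((2 * a * c * l + β₀ * d
        + Real.sqrt (β₀ ^ 2 * d ^ 2 + 4 * a * c * l * d * β₀)) / (2 * l * c ^ 2))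
      + a ^ 2 * l = 0) ∧
    ((2 * a * c * l + β₀ * d - Real.sqrt (β₀ ^ 2 * d ^ 2 + 4 * a * c * l * d * β₀))
        / (2 * l * c ^ 2) ∈ Set.Ioo 0 (a / c)) ∧
    a / c < (2 * a * c * l + β₀ * d + Real.sqrt (β₀ ^ 2 * d ^ 2 + 4 * a * c * l * d * β₀))
        / (2 * l * c ^ 2) := by
  rw [mul_assoc 2 l]
  have hA : 0 < l * c ^ 2 := by positivity
  have hs : Real.sqrt (β₀ ^ 2 * d ^ 2 + 4 * a * c * l * d * β₀) ^ 2
      = (2 * a * c * l + β₀ * d) ^ 2 - 4 * (l * c ^ 2) * (a ^ 2 * l) := by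
    rw [Real.sq_sqrt (by positivity)]
    ring
  have hfeas : l * c ^ 2 * (a / c) ^ 2 - (2 * a * c * l + β₀ * d) * (a / c) + a ^ 2 * l < 0 := by
    have : l * c ^ 2 * (a / c) ^ 2 - (2 * a * c * l + β₀ * d) * (a / c) + a ^ 2 * l
        = -(β₀ * d * a / c) := by
      field_simp
      ring
    rw [this, neg_lt_zero]
    positivity
  have hbetween := mem_Ioo_roots_of_quadratic_neg hA (Real.sqrt_nonneg _) hs hfeas
  exact ⟨quadratic_root_sub_eq_zero hA.ne' hs, quadratic_root_add_eq_zero hA.ne' hs,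
    ⟨quadratic_root_sub_pos hA (by positivity) (by positivity) hs,
      hbetween.1⟩, hbetween.2⟩

/-- Theorem 2 feasibility: among the two roots of the KKT quadratic, exactly one,
namely `x₂`, lies in `(0, a/c)`, while the other root exceeds `a/c`. -/
theorem stmt_12 (l a c d β₀ b : ℝ) (hl : 0 < l) (ha : 0 < a) (hc : 0 < c)
    (hd : 0 < d) (hβ : 0 < β₀) (hb : 0 < b) (habc : a * b - c = d) :
    (l * c ^ 2 * ((2 * a * c * l + β₀ * d
        - Real.sqrt (β₀ ^ 2 * d ^ 2 + 4 * a * c * l * d * β₀)) / (2 * l * c ^ 2)) ^ 2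
      - (2 * a * c * l + β₀ * d) * ((2 * a * c * l + β₀ * d
        - Real.sqrt (β₀ ^ 2 * d ^ 2 + 4 * a * c * l * d * β₀)) / (2 * l * c ^ 2))
      + a ^ 2 * l = 0) ∧
    (l * c ^ 2 * ((2 * a * c * l + β₀ * d
        + Real.sqrt (β₀ ^ 2 * d ^ 2 + 4 * a * c * l * d * β₀)) / (2 * l * c ^ 2)) ^ 2
      - (2 * a * c * l + β₀ * d) * ((2 * a * c * l + β₀ * d
        + Real.sqrt (β₀ ^ 2 * d ^ 2 + 4 * a * c * l * d * β₀)) / (2 * l * c ^ 2))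
      + a ^ 2 * l = 0) ∧
    ((2 * a * c * l + β₀ * d - Real.sqrt (β₀ ^ 2 * d ^ 2 + 4 * a * c * l * d * β₀))
        / (2 * l * c ^ 2) ∈ Set.Ioo 0 (a / c)) ∧
    a / c < (2 * a * c * l + β₀ * d + Real.sqrt (β₀ ^ 2 * d ^ 2 + 4 * a * c * l * d * β₀))
        / (2 * l * c ^ 2) :=
  stmt_12_general l a c d β₀ hl ha hc hd hβ
end
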